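/- Let a > b > 0, s' = sqrt((2*b² + a*b)/(2*a² + a*b)), α = s'*a, β = b, and δ = sqrt(α⁴ − α²β² + β⁴). Then (1/4) · 2*(δ − β²)*(α² − δ)/(α² − β²)² = a*b/(2*(a+b)²). -/
import Mathlib


/-- For `a > b > 0`, `s' = √((2b² + ab)/(2a² + ab))`, `α = s'·a`, `β = b`,
`δ = √(α⁴ - α²β² + β⁴)`, one has
`(1/4)·2(δ-β²)(α²-δ)/(α²-β²)² = ab/(2(a+b)²)`. -/
theorem excentral_cosine_product_value (a b : ℝ) (hb : 0 < b) (hab : b < a)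
    (s' α β δ : ℝ)
    (hs' : s' = Real.sqrt ((2 * b ^ 2 + a * b) / (2 * a ^ 2 + a * b)))
    (hα : α = s' * a) (hβ : β = b)
    (hδ : δ = Real.sqrt (α ^ 4 - α ^ 2 * β ^ 2 + β ^ 4)) :
    (1 / 4) * (2 * (δ - β ^ 2) * (α ^ 2 - δ) / (α ^ 2 - β ^ 2) ^ 2) =
      a * b / (2 * (a + b) ^ 2) := by
  have ha : 0 < a := hb.trans hab
  have h2ab : (0:ℝ) < 2 * a + b := by linarith
  have hane : a ≠ 0 := ne_of_gt ha
  have h2abne : 2 * a + b ≠ 0 := ne_of_gt h2ab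
  have habne : a + b ≠ 0 := by positivity
  have hamb : a - b ≠ 0 := sub_ne_zero.mpr (ne_of_gt hab)
  have hbne : b ≠ 0 := ne_of_gt hb
  have hs2 : s' ^ 2 = (2 * b ^ 2 + a * b) / (2 * a ^ 2 + a * b) := by
    rw [hs']
    exact Real.sq_sqrt (by positivity)
  have hα2 : α ^ 2 = a * b * (a + 2 * b) / (2 * a + b) := by
    rw [hα, mul_pow, hs2]
    have h2 : 2 * a ^ 2 + a * b ≠ 0 := by positivity
    field_simp
    ring
  have hδ2 : δ = b * (a ^ 2 + a * b + b ^ 2) / (2 * a + b) := by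
    rw [hδ, hβ]
    have : α ^ 4 - α ^ 2 * b ^ 2 + b ^ 4
        = (b * (a ^ 2 + a * b + b ^ 2) / (2 * a + b)) ^ 2 := by
      have : α ^ 4 = (α ^ 2) ^ 2 := by ring
      rw [this, hα2]
      field_simp
      ring
    rw [this, Real.sqrt_sq (by positivity)]
  have hfac : α ^ 2 - β ^ 2 = b * (a - b) * (a + b) / (2 * a + b) := by
    rw [hα2, hβ]; field_simp; ring
  rw [hfac, hα2, hβ, hδ2]
  field_simp
  ring
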